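/- If H is a graph with o(H) = 𝒩 and γ_MB(H) = γ(H), and G is a graph with n(G) ≥ 2, then γ_MB(G⊙H) = 1 + (n(G)−1)·γ_MB(H) and γ_MB'(G⊙H) = n(G)·γ_MB(H). In particular, if moreover γ_MB(H) = 2, then γ_MB(G⊙H) = 2n(G) − 1 and γ_MB'(G⊙H) = 2n(G). -/

import Mathlib

/-!
Formalization of the Maker-Breaker domination game (MBD game).

In the MBD game on a graph `G`, Dominator and Staller alternately select
previously unplayed vertices.  Dominator wins when the set of vertices he has
selected is a dominating set of `G`; Staller wins when she has selected a
vertex of every dominating set of `G`, which happens exactly when the closed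
neighbourhood of some vertex is entirely contained in her set of selected
vertices.
-/

/-- `D` is a dominating set of `G` (as a finset of vertices). -/
def IsDomSet {V : Type*} (G : SimpleGraph V) (D : Finset V) : Prop :=
  ∀ v, v ∈ D ∨ ∃ u ∈ D, G.Adj u v

/-- Staller (whose selected vertices form `S`) has won: she owns the whole
closed neighbourhood of some vertex, hence a vertex of every dominating set. -/
def StallerWon {V : Type*} (G : SimpleGraph V) (S : Finset V) : Prop :=
  ∃ v, v ∈ S ∧ ∀ u, G.Adj v u → u ∈ S

section Game

variable {V : Type*} [DecidableEq V]

mutual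
  /-- Position with Dominator's vertices `D`, Staller's vertices `S` and
  Dominator to move: Dominator can guarantee to complete a dominating set
  using at most `k` further moves of his own. -/
  inductive DomWinD (G : SimpleGraph V) : Finset V → Finset V → ℕ → Prop where
    | done (D S : Finset V) (k : ℕ) : IsDomSet G D → DomWinD G D S k
    | step (D S : Finset V) (k : ℕ) (v : V) : v ∉ D → v ∉ S →
        DomWinS G (insert v D) S k → DomWinD G D S (k + 1)

  /-- Position with Dominator's vertices `D`, Staller's vertices `S` and
  Staller to move: Dominator can guarantee to complete a dominating set
  using at most `k` further moves of his own. -/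
  inductive DomWinS (G : SimpleGraph V) : Finset V → Finset V → ℕ → Prop where
    | done (D S : Finset V) (k : ℕ) : IsDomSet G D → DomWinS G D S k
    | step (D S : Finset V) (k : ℕ) : (∃ w, w ∉ D ∧ w ∉ S) →
        (∀ w, w ∉ D → w ∉ S → DomWinD G D (insert w S) k) → DomWinS G D S k
end

mutual
  /-- Position with Dominator's vertices `D`, Staller's vertices `S` and
  Staller to move: Staller can guarantee to claim a whole closed neighbourhood
  using at most `k` further moves of her own. -/
  inductive StalWinS (G : SimpleGraph V) : Finset V → Finset V → ℕ → Prop where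
    | done (D S : Finset V) (k : ℕ) : StallerWon G S → StalWinS G D S k
    | step (D S : Finset V) (k : ℕ) (w : V) : w ∉ D → w ∉ S →
        StalWinD G D (insert w S) k → StalWinS G D S (k + 1)

  /-- Position with Dominator's vertices `D`, Staller's vertices `S` and
  Dominator to move: Staller can guarantee to claim a whole closed
  neighbourhood using at most `k` further moves of her own. -/
  inductive StalWinD (G : SimpleGraph V) : Finset V → Finset V → ℕ → Prop where
    | done (D S : Finset V) (k : ℕ) : StallerWon G S → StalWinD G D S k
    | step (D S : Finset V) (k : ℕ) : (∃ v, v ∉ D ∧ v ∉ S) →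
        (∀ v, v ∉ D → v ∉ S → StalWinS G (insert v D) S k) → StalWinD G D S k
end

/-- `γ_MB(G)`: minimum number of Dominator's moves with which he can guarantee
to win the D-game (Dominator moves first); `⊤` if he cannot win it. -/
noncomputable def gammaMB (G : SimpleGraph V) : ℕ∞ :=
  sInf {k : ℕ∞ | ∃ n : ℕ, k = n ∧ DomWinD G ∅ ∅ n}

/-- `γ_MB'(G)`: minimum number of Dominator's moves with which he can guarantee
to win the S-game (Staller moves first); `⊤` if he cannot win it. -/
noncomputable def gammaMB' (G : SimpleGraph V) : ℕ∞ :=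
  sInf {k : ℕ∞ | ∃ n : ℕ, k = n ∧ DomWinS G ∅ ∅ n}

/-- `γ_SMB(G)`: minimum number of Staller's moves with which she can guarantee
to win the D-game (Dominator moves first); `⊤` if she cannot win it. -/
noncomputable def gammaSMB (G : SimpleGraph V) : ℕ∞ :=
  sInf {k : ℕ∞ | ∃ n : ℕ, k = n ∧ StalWinD G ∅ ∅ n}

/-- `γ_SMB'(G)`: minimum number of Staller's moves with which she can guarantee
to win the S-game (Staller moves first); `⊤` if she cannot win it. -/
noncomputable def gammaSMB' (G : SimpleGraph V) : ℕ∞ :=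
  sInf {k : ℕ∞ | ∃ n : ℕ, k = n ∧ StalWinS G ∅ ∅ n}

/-- Outcome `𝒟`: Dominator has a winning strategy no matter who starts. -/
def OutcomeD (G : SimpleGraph V) : Prop :=
  (∃ n, DomWinD G ∅ ∅ n) ∧ (∃ n, DomWinS G ∅ ∅ n)

/-- Outcome `𝒮`: Staller has a winning strategy no matter who starts. -/
def OutcomeS (G : SimpleGraph V) : Prop :=
  (∃ n, StalWinD G ∅ ∅ n) ∧ (∃ n, StalWinS G ∅ ∅ n)

/-- Outcome `𝒩`: the first player has a winning strategy. -/
def OutcomeN (G : SimpleGraph V) : Prop :=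
  (∃ n, DomWinD G ∅ ∅ n) ∧ (∃ n, StalWinS G ∅ ∅ n)

end Game

/-- The corona product `G ⊙ H`: one copy of `G`, a copy of `H` for every
vertex of `G`, and the `i`-th vertex of `G` joined to every vertex of the
`i`-th copy of `H`. -/
def coronaProd {α β : Type*} (G : SimpleGraph α) (H : SimpleGraph β) :
    SimpleGraph (α ⊕ α × β) where
  Adj x y :=
    match x, y with
    | Sum.inl a, Sum.inl a' => G.Adj a a'
    | Sum.inl a, Sum.inr p => a = p.1
    | Sum.inr p, Sum.inl a => a = p.1
    | Sum.inr p, Sum.inr q => p.1 = q.1 ∧ H.Adj p.2 q.2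
  symm := by
    constructor
    rintro (a | p) (a' | q) h
    · exact G.adj_symm h
    · exact h
    · exact h
    · exact ⟨h.1.symm, H.adj_symm h.2⟩
  loopless := by
    constructor
    rintro (a | p) h
    · exact G.irrefl h
    · exact H.irrefl h.2

/-- The domination number `γ(G)` of a finite graph. -/
noncomputable def domNumber {V : Type*} [Fintype V] (G : SimpleGraph V) : ℕ :=
  sInf {n : ℕ | ∃ D : Finset V, D.card = n ∧ IsDomSet G D}

/-- `v` is a dominating vertex: it is adjacent to all other vertices. -/
def IsDomVertex {V : Type*} (G : SimpleGraph V) (v : V) : Prop :=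
  ∀ u, u ≠ v → G.Adj v u

/-- `v` is an isolated vertex (degree `0`). -/
def IsIsolatedVertex {V : Type*} (G : SimpleGraph V) (v : V) : Prop :=
  ∀ u, ¬ G.Adj v u

/-- `v` is a leaf (degree `1`). -/
def IsLeaf {V : Type*} (G : SimpleGraph V) (v : V) : Prop :=
  ∃! u, G.Adj v u

/-- `v` is a strong support vertex: adjacent to at least two leaves. -/
def IsStrongSupport {V : Type*} (G : SimpleGraph V) (v : V) : Prop :=
  ∃ u w, u ≠ w ∧ G.Adj v u ∧ G.Adj v w ∧ IsLeaf G u ∧ IsLeaf G w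

/-!
Let `m = γ(H) = γ_MB(H)`. Dominator plays `G ⊙ H` as the sum of the `n(G)` cones formed by a
vertex `a` of `G` and its copy `H_a`, answering every move of Staller in the same cone; a
fresh cone costs him `m` moves (his D-game strategy on `H_a` if Staller took `a`, the single
vertex `a` otherwise). This gives `γ_MB' ≤ n(G)·m`, and `γ_MB ≤ 1 + (n(G) - 1)·m` after an
opening move on a vertex of `G`. Conversely, Staller takes the vertices `a` of `G` of untouched
copies one after another. Dominator has to answer inside `H_a` each time, since otherwise
Staller, moving first on `H_a`, wins the S-game there and so owns a closed neighbourhood of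
`G ⊙ H`. In the end each of these copies contains a dominating set of `H`, of size `≥ m`.
-/

open Finset

section Domination

variable {V : Type*} {G : SimpleGraph V}

theorem IsDomSet.mono {D D' : Finset V} (hD : IsDomSet G D) (h : D ⊆ D') : IsDomSet G D' :=
  fun v => (hD v).imp (@h v) fun ⟨u, hu, huv⟩ => ⟨u, h hu, huv⟩

theorem not_isDomSet_empty [Nonempty V] : ¬ IsDomSet G ∅ := fun h => by
  simpa using h (Classical.arbitrary V)

theorem StallerWon.not_isDomSet {D S : Finset V} (hS : StallerWon G S) (hDS : Disjoint D S) :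
    ¬ IsDomSet G D := by
  obtain ⟨v, hvS, hN⟩ := hS
  intro hD
  rcases hD v with hvD | ⟨u, huD, huv⟩
  · exact disjoint_left.1 hDS hvD hvS
  · exact disjoint_left.1 hDS huD (hN u huv.symm)

theorem domNumber_le_card [Fintype V] {A : Finset V} (hA : IsDomSet G A) :
    domNumber G ≤ A.card :=
  Nat.sInf_le ⟨A, rfl, hA⟩

end Domination

section Game

variable {V : Type*} [DecidableEq V] {G : SimpleGraph V}

theorem StalWinS.nonempty {D S : Finset V} {t : ℕ} : StalWinS G D S t → Nonempty V
  | .done _ _ _ ⟨v, _⟩ | .step _ _ _ v _ _ _ => ⟨v⟩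

mutual

theorem DomWinD.of_subset_staller {D S S' : Finset V} {k : ℕ} (hS : S' ⊆ S) :
    DomWinD G D S k → DomWinD G D S' k
  | .done _ _ _ hD => .done _ _ _ hD
  | .step _ _ _ v hvD hvS h =>
    .step _ _ _ v hvD (fun hv => hvS (hS hv)) (DomWinS.of_subset_staller hS h)

/-- A vertex of `S` that Staller plays again is answered as if she had played `w₀`. -/
theorem DomWinS.of_subset_staller {D S S' : Finset V} {k : ℕ} (hS : S' ⊆ S) :
    DomWinS G D S k → DomWinS G D S' k
  | .done _ _ _ hD => .done _ _ _ hD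
  | .step _ _ _ ⟨w₀, hw₀D, hw₀S⟩ h =>
    .step _ _ _ ⟨w₀, hw₀D, fun hw => hw₀S (hS hw)⟩ fun w hwD _ => by
      by_cases hwS : w ∈ S
      · exact DomWinD.of_subset_staller (insert_subset (mem_insert_of_mem hwS)
          (hS.trans (subset_insert _ _))) (h w₀ hw₀D hw₀S)
      · exact DomWinD.of_subset_staller (insert_subset_insert _ hS) (h w hwD hwS)

end

theorem DomWinS.domWinD {D S : Finset V} {k : ℕ} : DomWinS G D S k → DomWinD G D S k
  | .done _ _ _ hD => .done _ _ _ hD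
  | .step _ _ _ ⟨w, hwD, hwS⟩ h => (h w hwD hwS).of_subset_staller (subset_insert _ _)

mutual

theorem DomWinD.exists_isDomSet_union {D S : Finset V} {k : ℕ} :
    DomWinD G D S k → ∃ E : Finset V, E.card ≤ k ∧ Disjoint E S ∧ IsDomSet G (D ∪ E)
  | .done _ _ _ hD => ⟨∅, by simp, disjoint_empty_left _, by simpa using hD⟩
  | .step _ _ k v _ hvS h =>
    have ⟨E, hE, hES, hDE⟩ := DomWinS.exists_isDomSet_union h
    ⟨insert v E, (card_insert_le _ _).trans (by omega), disjoint_insert_left.2 ⟨hvS, hES⟩,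
      by rwa [union_insert, ← insert_union]⟩

theorem DomWinS.exists_isDomSet_union {D S : Finset V} {k : ℕ} :
    DomWinS G D S k → ∃ E : Finset V, E.card ≤ k ∧ Disjoint E S ∧ IsDomSet G (D ∪ E)
  | .done _ _ _ hD => ⟨∅, by simp, disjoint_empty_left _, by simpa using hD⟩
  | .step _ _ _ ⟨w, hwD, hwS⟩ h =>
    have ⟨E, hE, hES, hDE⟩ := DomWinD.exists_isDomSet_union (h w hwD hwS)
    ⟨E, hE, hES.mono_right (subset_insert _ _), hDE⟩

end

mutual

theorem StalWinS.not_domWinS {D S : Finset V} {t k : ℕ} (hDS : Disjoint D S) :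
    StalWinS G D S t → ¬ DomWinS G D S k
  | .done _ _ _ hS, hwin =>
    have ⟨_, _, hES, hDE⟩ := hwin.exists_isDomSet_union
    hS.not_isDomSet (disjoint_union_left.2 ⟨hDS, hES⟩) hDE
  | .step _ _ _ _ hwD _ h, .done _ _ _ hD =>
    StalWinD.not_domWinD (disjoint_insert_right.2 ⟨hwD, hDS⟩) h (.done _ _ k hD)
  | .step _ _ _ w hwD hwS h, .step _ _ _ _ hwin =>
    StalWinD.not_domWinD (disjoint_insert_right.2 ⟨hwD, hDS⟩) h (hwin w hwD hwS)

theorem StalWinD.not_domWinD {D S : Finset V} {t k : ℕ} (hDS : Disjoint D S) :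
    StalWinD G D S t → ¬ DomWinD G D S k
  | .done _ _ _ hS, hwin =>
    have ⟨_, _, hES, hDE⟩ := hwin.exists_isDomSet_union
    hS.not_isDomSet (disjoint_union_left.2 ⟨hDS, hES⟩) hDE
  | .step _ _ _ ⟨v, hvD, hvS⟩ h, .done _ _ _ hD =>
    StalWinS.not_domWinS (disjoint_insert_left.2 ⟨hvS, hDS⟩) (h v hvD hvS)
      (.done _ _ k (hD.mono (subset_insert _ _)))
  | .step _ _ _ _ h, .step _ _ _ v hvD hvS hwin =>
    StalWinS.not_domWinS (disjoint_insert_left.2 ⟨hvS, hDS⟩) (h v hvD hvS) hwin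

end

theorem card_compl_insert_union_insert_lt [Fintype V] {D S : Finset V} {v w : V} (hwD : w ∉ D)
    (hwS : w ∉ S) : (insert v D ∪ insert w S)ᶜ.card < (D ∪ S)ᶜ.card := by
  have hlt : (D ∪ S).card < (insert v D ∪ insert w S).card :=
    card_lt_card <| ssubset_iff_of_subset (union_subset_union (subset_insert _ _)
      (subset_insert _ _)) |>.2 ⟨w, by simp, by simp [hwD, hwS]⟩
  have := card_le_univ (insert v D ∪ insert w S)
  rw [card_compl, card_compl]
  omega

theorem exists_domWinD_gammaMB (h : ∃ n, DomWinD G ∅ ∅ n) :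
    ∃ n : ℕ, gammaMB G = n ∧ DomWinD G ∅ ∅ n :=
  have ⟨n, hn⟩ := h
  csInf_mem (s := {k : ℕ∞ | ∃ n : ℕ, k = n ∧ DomWinD G ∅ ∅ n}) ⟨n, n, rfl, hn⟩

theorem gammaMB_eq {N : ℕ} (hwin : DomWinD G ∅ ∅ N) (hmin : ∀ k, DomWinD G ∅ ∅ k → N ≤ k) :
    gammaMB G = N :=
  le_antisymm (sInf_le ⟨N, rfl, hwin⟩)
    (le_sInf fun _ ⟨k, hk, hwin'⟩ => hk ▸ by exact_mod_cast hmin k hwin')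

theorem gammaMB'_eq {N : ℕ} (hwin : DomWinS G ∅ ∅ N) (hmin : ∀ k, DomWinS G ∅ ∅ k → N ≤ k) :
    gammaMB' G = N :=
  le_antisymm (sInf_le ⟨N, rfl, hwin⟩)
    (le_sInf fun _ ⟨k, hk, hwin'⟩ => hk ▸ by exact_mod_cast hmin k hwin')

end Game

section Copies

variable {ι W V : Type*} [Fintype W] [DecidableEq V] {L : SimpleGraph W} {G : SimpleGraph V}
  (e : ι × W ≃ V)

def localPart (i : ι) (T : Finset V) : Finset W := univ.filter fun w => e (i, w) ∈ T

variable {e}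

@[simp]
theorem mem_localPart {i : ι} {T : Finset V} {w : W} : w ∈ localPart e i T ↔ e (i, w) ∈ T := by
  simp [localPart]

@[simp]
theorem localPart_empty (i : ι) : localPart e i ∅ = ∅ := by
  ext; simp

theorem localPart_insert_of_ne {i j : ι} (hij : i ≠ j) {w : W} {T : Finset V} :
    localPart e i (insert (e (j, w)) T) = localPart e i T := by
  ext; simp [hij]

theorem isDomSet_of_forall_localPart (hadj : ∀ i x y, L.Adj x y → G.Adj (e (i, x)) (e (i, y)))
    {D : Finset V} (hD : ∀ i, IsDomSet L (localPart e i D)) : IsDomSet G D := by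
  intro v
  obtain ⟨⟨i, x⟩, rfl⟩ := e.surjective v
  rcases hD i x with hx | ⟨y, hy, hyx⟩
  · exact .inl (mem_localPart.1 hx)
  · exact .inr ⟨_, mem_localPart.1 hy, hadj i y x hyx⟩

variable [DecidableEq W]

theorem localPart_insert_self {i : ι} {w : W} {T : Finset V} :
    localPart e i (insert (e (i, w)) T) = insert w (localPart e i T) := by
  ext; simp [eq_comm]

variable (L e) in
def LocalWins (D S : Finset V) (c : ι → ℕ) : Prop :=
  ∀ i, DomWinS L (localPart e i D) (localPart e i S) (c i)

variable [Fintype ι] [DecidableEq ι]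

theorem LocalWins.exists_reply_of_domWinD {D S : Finset V} {c : ι → ℕ} (i : ι)
    (hi : DomWinD L (localPart e i D) (localPart e i S) (c i))
    (hnd : ¬ IsDomSet L (localPart e i D))
    (hothers : ∀ j ≠ i, DomWinS L (localPart e j D) (localPart e j S) (c j)) :
    ∃ v c', v ∉ D ∧ v ∉ S ∧ ∑ j, c j = ∑ j, c' j + 1 ∧ LocalWins L e (insert v D) S c' := by
  generalize hci : c i = n at hi
  cases hi with
  | done _ _ _ hD => exact absurd hD hnd
  | step _ _ c₀ y hyD hyS h =>
    refine ⟨e (i, y), Function.update c i c₀, mem_localPart.not.1 hyD,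
      mem_localPart.not.1 hyS, ?_, fun j => ?_⟩
    · rw [sum_update_of_mem (mem_univ i), ← add_sum_erase _ _ (mem_univ i),
        sdiff_singleton_eq_erase]
      omega
    · rcases eq_or_ne j i with rfl | hji
      · simpa [localPart_insert_self] using h
      · simpa [localPart_insert_of_ne hji, hji] using hothers j hji

/-- Dominator answers Staller in the copy she played in, unless that copy is already
dominated; then he makes progress in some copy that is not. -/
theorem LocalWins.exists_reply {D S : Finset V} {c : ι → ℕ} (h : LocalWins L e D S c)
    {i₀ : ι} (hi₀ : ¬ IsDomSet L (localPart e i₀ D)) {w : V} (hwD : w ∉ D) (hwS : w ∉ S) :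
    ∃ v c', v ∉ D ∧ v ∉ insert w S ∧ ∑ j, c j = ∑ j, c' j + 1 ∧
      LocalWins L e (insert v D) (insert w S) c' := by
  obtain ⟨⟨i, x⟩, rfl⟩ := e.surjective w
  have hothers : ∀ j ≠ i, DomWinS L (localPart e j D)
      (localPart e j (insert (e (i, x)) S)) (c j) := fun j hji => by
    simpa [localPart_insert_of_ne hji] using h j
  by_cases hi : IsDomSet L (localPart e i D)
  · have hi₀i : i₀ ≠ i := by rintro rfl; exact hi₀ hi
    refine LocalWins.exists_reply_of_domWinD i₀ (hothers i₀ hi₀i).domWinD hi₀ fun j hj => ?_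
    rcases eq_or_ne j i with rfl | hji
    · exact .done _ _ _ hi
    · exact hothers j hji
  · refine LocalWins.exists_reply_of_domWinD i ?_ hi hothers
    cases h i with
    | done _ _ _ hD => exact absurd hD hi
    | step _ _ _ _ hall =>
      simpa [localPart_insert_self] using
        hall x (mem_localPart.not.2 hwD) (mem_localPart.not.2 hwS)

/-- `e` splits `V` into copies of `W`, and `hadj` makes each copy of `L` a subgraph of `G`. -/
theorem LocalWins.domWinS [Fintype V] (hadj : ∀ i x y, L.Adj x y → G.Adj (e (i, x)) (e (i, y)))
    {D S : Finset V} {c : ι → ℕ} (h : LocalWins L e D S c) : DomWinS G D S (∑ i, c i) := by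
  by_cases hD : ∀ i, IsDomSet L (localPart e i D)
  · exact .done _ _ _ (isDomSet_of_forall_localPart hadj hD)
  obtain ⟨i₀, hi₀⟩ := not_forall.1 hD
  have hfree : ∃ w, w ∉ D ∧ w ∉ S := by
    cases h i₀ with
    | done _ _ _ hD => exact absurd hD hi₀
    | step _ _ _ hex _ =>
      obtain ⟨x, hxD, hxS⟩ := hex
      exact ⟨e (i₀, x), mem_localPart.not.1 hxD, mem_localPart.not.1 hxS⟩
  refine .step _ _ _ hfree fun w hwD hwS => ?_
  obtain ⟨v, c', hvD, hvS, hc, h'⟩ := h.exists_reply hi₀ hwD hwS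
  rw [hc]
  exact .step _ _ _ v hvD hvS (h'.domWinS hadj)
termination_by (D ∪ S)ᶜ.card
decreasing_by exact card_compl_insert_union_insert_lt hwD hwS

end Copies

section Cone

variable {β : Type*} {H : SimpleGraph β}

variable (H) in
/-- A copy of `H` in a corona product together with its vertex of `G`, the apex `none`. -/
def coneGraph : SimpleGraph (Option β) where
  Adj
    | none, some _ | some _, none => True
    | some b, some b' => H.Adj b b'
    | none, none => False
  symm := by
    constructor
    rintro (_ | b) (_ | b') h
    exacts [h, trivial, trivial, H.adj_symm h]
  loopless := by
    constructor
    rintro (_ | b) h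
    exacts [h, H.irrefl h]

theorem isDomSet_coneGraph_apex : IsDomSet (coneGraph H) {none} := by
  rintro (_ | b)
  exacts [.inl (mem_singleton_self _), .inr ⟨none, mem_singleton_self _, trivial⟩]

theorem IsDomSet.map_some_coneGraph [Nonempty β] {P : Finset β} (hP : IsDomSet H P) :
    IsDomSet (coneGraph H) (P.map .some) := by
  rintro (_ | b)
  · obtain ⟨u, hu⟩ : P.Nonempty := by
      by_contra hP'
      exact not_isDomSet_empty (not_nonempty_iff_eq_empty.1 hP' ▸ hP)
    exact .inr ⟨some u, mem_map_of_mem _ hu, trivial⟩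
  · rcases hP b with hb | ⟨u, hu, hub⟩
    · exact .inl (mem_map_of_mem _ hb)
    · exact .inr ⟨some u, mem_map_of_mem _ hu, hub⟩

variable [DecidableEq β]

mutual

/-- After Staller has taken the apex, Dominator plays his strategy on `H`. -/
theorem DomWinD.map_some_coneGraph [Nonempty β] {P Q : Finset β} {k : ℕ} :
    DomWinD H P Q k → DomWinD (coneGraph H) (P.map .some) (insert none (Q.map .some)) k
  | .done _ _ _ hP => .done _ _ _ hP.map_some_coneGraph
  | .step _ _ _ v hvP hvQ h =>
    .step _ _ _ (some v) (by simpa using hvP) (by simpa using hvQ)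
      (by simpa [map_insert] using DomWinS.map_some_coneGraph h)

theorem DomWinS.map_some_coneGraph [Nonempty β] {P Q : Finset β} {k : ℕ} :
    DomWinS H P Q k → DomWinS (coneGraph H) (P.map .some) (insert none (Q.map .some)) k
  | .done _ _ _ hP => .done _ _ _ hP.map_some_coneGraph
  | .step _ _ _ ⟨w, hwP, hwQ⟩ h =>
    .step _ _ _ ⟨some w, by simpa using hwP, by simpa using hwQ⟩ fun
      | none, _, hx => absurd (mem_insert_self _ _) hx
      | some x, hxP, hxQ => by
        simpa [map_insert, insert_comm] using
          DomWinD.map_some_coneGraph (h x (by simpa using hxP) (by simpa using hxQ))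

end

/-- Dominator answers the apex with his D-game strategy on `H`, and anything else with the
apex. -/
theorem DomWinD.domWinS_coneGraph [Nonempty β] {m : ℕ} (hm : DomWinD H ∅ ∅ m) :
    DomWinS (coneGraph H) ∅ ∅ m := by
  refine .step _ _ _ ⟨none, by simp, by simp⟩ fun
    | none, _, _ => by simpa using hm.map_some_coneGraph
    | some b, _, _ => ?_
  cases hm with
  | done _ _ _ hD => exact absurd hD not_isDomSet_empty
  | step _ _ _ _ _ _ _ =>
    exact .step _ _ _ none (by simp) (by simp) (.done _ _ _ isDomSet_coneGraph_apex)

end Cone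

section Corona

variable {α β : Type*} {G : SimpleGraph α} {H : SimpleGraph β}

/-- The vertex `x` of the `a`-th copy of `coneGraph H` inside `G ⊙ H`. -/
def coronaCopyEquiv : α × Option β ≃ α ⊕ α × β where
  toFun
    | (a, none) => .inl a
    | (a, some b) => .inr (a, b)
  invFun
    | .inl a => (a, none)
    | .inr (a, b) => (a, some b)
  left_inv := by rintro ⟨a, _ | b⟩ <;> rfl
  right_inv := by rintro (a | ⟨a, b⟩) <;> rfl

theorem coronaProd_adj_coronaCopyEquiv (a : α) (x y : Option β) (h : (coneGraph H).Adj x y) :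
    (coronaProd G H).Adj (coronaCopyEquiv (a, x)) (coronaCopyEquiv (a, y)) := by
  rcases x with _ | b <;> rcases y with _ | b'
  exacts [h.elim, rfl, rfl, ⟨rfl, h⟩]

def IsFreshCopy (a : α) (T : Finset (α ⊕ α × β)) : Prop :=
  ∀ x : Option β, coronaCopyEquiv (a, x) ∉ T

theorem isFreshCopy_empty (a : α) : IsFreshCopy a (∅ : Finset (α ⊕ α × β)) :=
  fun _ => notMem_empty _

variable [DecidableEq α] [DecidableEq β]

theorem IsFreshCopy.insert {a a' : α} {T : Finset (α ⊕ α × β)} (h : IsFreshCopy a T)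
    (ha : a' ≠ a) (x : Option β) : IsFreshCopy a (insert (coronaCopyEquiv (a', x)) T) :=
  fun y hy => (mem_insert.1 hy).elim
    (fun he => ha (Prod.ext_iff.1 (coronaCopyEquiv.injective he)).1.symm) (h y)

variable [Fintype β]

def coronaFiber (a : α) (T : Finset (α ⊕ α × β)) : Finset β :=
  univ.filter fun b => .inr (a, b) ∈ T

@[simp]
theorem mem_coronaFiber {a : α} {T : Finset (α ⊕ α × β)} {b : β} :
    b ∈ coronaFiber a T ↔ .inr (a, b) ∈ T := by
  simp [coronaFiber]

theorem coronaFiber_union (a : α) (T T' : Finset (α ⊕ α × β)) :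
    coronaFiber a (T ∪ T') = coronaFiber a T ∪ coronaFiber a T' := by
  ext; simp

theorem coronaFiber_insert_of_ne {a : α} {v : α ⊕ α × β} (hv : ∀ b, v ≠ .inr (a, b))
    (T : Finset (α ⊕ α × β)) : coronaFiber a (insert v T) = coronaFiber a T := by
  ext b
  simp only [mem_coronaFiber, mem_insert, or_iff_right_iff_imp]
  exact fun h => absurd h.symm (hv b)

theorem coronaFiber_insert_inr (a : α) (b : β) (T : Finset (α ⊕ α × β)) :
    coronaFiber a (insert (.inr (a, b)) T) = insert b (coronaFiber a T) := by
  ext; simp [eq_comm]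

theorem IsFreshCopy.coronaFiber_eq_empty {a : α} {T : Finset (α ⊕ α × β)}
    (h : IsFreshCopy a T) : coronaFiber a T = ∅ :=
  eq_empty_of_forall_notMem fun b hb => h (some b) (mem_coronaFiber.1 hb)

theorem sum_card_coronaFiber_le (A : Finset α) (T : Finset (α ⊕ α × β)) :
    ∑ a ∈ A, (coronaFiber a T).card ≤ T.card := calc
  ∑ a ∈ A, (coronaFiber a T).card = ((A ×ˢ univ).filter fun p => .inr p ∈ T).card := by
    simp only [coronaFiber, card_filter, sum_product]
  _ ≤ T.card := card_le_card_of_injOn Sum.inr (fun p hp => (mem_filter.1 hp).2)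
    Sum.inr_injective.injOn

/-- Only the vertex `a` of `G` and the `a`-th copy of `H` are adjacent to that copy. -/
theorem IsDomSet.coronaFiber {D : Finset (α ⊕ α × β)} (hD : IsDomSet (coronaProd G H) D)
    {a : α} (ha : .inl a ∉ D) : IsDomSet H (coronaFiber a D) := by
  intro b
  rcases hD (.inr (a, b)) with hb | ⟨_ | ⟨a', u⟩, hu, hub⟩
  · exact .inl (mem_coronaFiber.2 hb)
  · obtain rfl : _ = a := hub
    exact absurd hu ha
  · obtain ⟨rfl, hub⟩ := hub
    exact .inr ⟨u, mem_coronaFiber.2 hu, hub⟩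

theorem StallerWon.coronaProd {S : Finset (α ⊕ α × β)} {a : α} (ha : .inl a ∈ S)
    (hS : StallerWon H (coronaFiber a S)) : StallerWon (coronaProd G H) S := by
  obtain ⟨b, hb, hN⟩ := hS
  refine ⟨.inr (a, b), mem_coronaFiber.1 hb, ?_⟩
  rintro (a' | ⟨a', u⟩) hu
  · obtain rfl : a' = a := hu
    exact ha
  · obtain ⟨rfl, hbu⟩ := hu
    exact mem_coronaFiber.1 (hN u hbu)

mutual

/-- Staller, owning the vertex `a` of `G`, plays her game on `H` in the `a`-th copy. A move of
Dominator outside that copy is read as one inside it, which can only help him; hence `hP`. -/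
theorem StalWinS.coronaProd {D S : Finset (α ⊕ α × β)} {a : α} {P Q : Finset β} {t : ℕ}
    (ha : .inl a ∈ S) (hP : coronaFiber a D ⊆ P) (hQ : coronaFiber a S = Q) :
    StalWinS H P Q t → StalWinS (coronaProd G H) D S t
  | .done _ _ _ hw => .done _ _ _ (by subst hQ; exact StallerWon.coronaProd ha hw)
  | .step _ _ _ w hwP hwQ h =>
    .step _ _ _ (.inr (a, w)) (fun hw => hwP (hP (mem_coronaFiber.2 hw)))
      (fun hw => hwQ (hQ ▸ mem_coronaFiber.2 hw))
      (StalWinD.coronaProd (mem_insert_of_mem ha) hP (by rw [coronaFiber_insert_inr, hQ]) h)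

theorem StalWinD.coronaProd {D S : Finset (α ⊕ α × β)} {a : α} {P Q : Finset β} {t : ℕ}
    (ha : .inl a ∈ S) (hP : coronaFiber a D ⊆ P) (hQ : coronaFiber a S = Q) :
    StalWinD H P Q t → StalWinD (coronaProd G H) D S t
  | .done _ _ _ hw => .done _ _ _ (by subst hQ; exact StallerWon.coronaProd ha hw)
  | .step _ _ _ ⟨w₀, hw₀P, hw₀Q⟩ h =>
    .step _ _ _ ⟨.inr (a, w₀), fun hw => hw₀P (hP (mem_coronaFiber.2 hw)),
      fun hw => hw₀Q (hQ ▸ mem_coronaFiber.2 hw)⟩ fun v hvD hvS => by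
      by_cases hv : ∃ b ∉ P, v = .inr (a, b)
      · obtain ⟨b, hbP, rfl⟩ := hv
        refine StalWinS.coronaProd ha ?_ hQ (h b hbP (hQ ▸ mt mem_coronaFiber.1 hvS))
        rw [coronaFiber_insert_inr]
        exact insert_subset_insert _ hP
      · refine StalWinS.coronaProd ha ?_ hQ (h w₀ hw₀P hw₀Q)
        intro b hb
        rcases mem_insert.1 (mem_coronaFiber.1 hb) with hb | hb
        · exact mem_insert_of_mem (by_contra fun hbP => hv ⟨b, hbP, hb.symm⟩)
        · exact mem_insert_of_mem (hP (mem_coronaFiber.2 hb))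

end

/-- Once Staller has taken the vertex `a` of `G` of a fresh copy, Dominator must answer inside
the `a`-th copy of `H`: otherwise Staller wins the S-game there, which she can by assumption. -/
theorem DomWinS.exists_reply_of_isFreshCopy {t k : ℕ} (hst : StalWinS H ∅ ∅ t)
    {D S : Finset (α ⊕ α × β)} {a : α} (hD : IsFreshCopy a D) (hS : IsFreshCopy a S)
    (hDS : Disjoint D S) (h : DomWinS (coronaProd G H) D S k) :
    ∃ b k₀, k = k₀ + 1 ∧
      DomWinS (coronaProd G H) (insert (.inr (a, b)) D) (insert (.inl a) S) k₀ := by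
  have := hst.nonempty
  have hnd : ¬ IsDomSet (coronaProd G H) D := fun hdom => not_isDomSet_empty
    (hD.coronaFiber_eq_empty ▸ hdom.coronaFiber (hD none))
  cases h with
  | done _ _ _ hdom => exact absurd hdom hnd
  | step _ _ _ _ hall =>
    cases hall (.inl a) (hD none) (hS none) with
    | done _ _ _ hdom => exact absurd hdom hnd
    | step _ _ k₀ v _ hvS h' =>
      by_cases hv : ∃ b, v = .inr (a, b)
      · obtain ⟨b, rfl⟩ := hv
        exact ⟨b, k₀, rfl, h'⟩
      · refine absurd h' (StalWinS.not_domWinS ?_ (StalWinS.coronaProd (mem_insert_self _ _)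
          ?_ ?_ hst))
        · exact disjoint_insert_left.2 ⟨hvS, disjoint_insert_right.2 ⟨hD none, hDS⟩⟩
        · rw [coronaFiber_insert_of_ne (not_exists.1 hv), hD.coronaFiber_eq_empty]
        · rw [coronaFiber_insert_of_ne (fun _ => Sum.inl_ne_inr), hS.coronaFiber_eq_empty]

/-- Staller takes the vertices of `G` of the fresh copies one by one. -/
theorem DomWinS.exists_isDomSet_union_of_isFreshCopy {t : ℕ} (hst : StalWinS H ∅ ∅ t)
    (U : Finset α) {D S : Finset (α ⊕ α × β)} {k : ℕ}
    (hU : ∀ a ∈ U, IsFreshCopy a D ∧ IsFreshCopy a S) (hDS : Disjoint D S)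
    (h : DomWinS (coronaProd G H) D S k) :
    ∃ E, E.card ≤ k ∧ Disjoint E S ∧ IsDomSet (coronaProd G H) (D ∪ E) ∧
      ∀ a ∈ U, .inl a ∉ E := by
  induction U using Finset.induction_on generalizing D S k with
  | empty =>
    obtain ⟨E, hE, hES, hDE⟩ := h.exists_isDomSet_union
    exact ⟨E, hE, hES, hDE, by simp⟩
  | insert a₀ U ha₀ ih =>
    obtain ⟨hD₀, hS₀⟩ := hU a₀ (mem_insert_self _ _)
    obtain ⟨b, k₀, rfl, h'⟩ := h.exists_reply_of_isFreshCopy hst hD₀ hS₀ hDS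
    have hU' : ∀ a ∈ U, IsFreshCopy a (insert (.inr (a₀, b)) D) ∧
        IsFreshCopy a (insert (.inl a₀) S) := fun a ha =>
      have ha₀a : a₀ ≠ a := fun h => ha₀ (h ▸ ha)
      ⟨(hU a (mem_insert_of_mem ha)).1.insert ha₀a (some b),
        (hU a (mem_insert_of_mem ha)).2.insert ha₀a none⟩
    obtain ⟨E, hE, hES, hDE, hUE⟩ := ih hU' (disjoint_insert_left.2
      ⟨mem_insert.not.2 (not_or.2 ⟨Sum.inr_ne_inl, hS₀ (some b)⟩),
        disjoint_insert_right.2 ⟨hD₀ none, hDS⟩⟩) h'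
    refine ⟨insert (.inr (a₀, b)) E, (card_insert_le _ _).trans (by omega),
      disjoint_insert_left.2 ⟨hS₀ (some b), hES.mono_right (subset_insert _ _)⟩,
      by rwa [union_insert, ← insert_union], fun a ha hav => ?_⟩
    rcases mem_insert.1 hav with hav | haE
    · exact Sum.inl_ne_inr hav
    · rcases mem_insert.1 ha with rfl | ha
      · exact disjoint_left.1 hES haE (mem_insert_self _ _)
      · exact hUE a ha haE

theorem DomWinS.card_mul_domNumber_le {t : ℕ} (hst : StalWinS H ∅ ∅ t) (U : Finset α)
    {D S : Finset (α ⊕ α × β)} {k : ℕ} (hU : ∀ a ∈ U, IsFreshCopy a D ∧ IsFreshCopy a S)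
    (hDS : Disjoint D S) (h : DomWinS (coronaProd G H) D S k) : U.card * domNumber H ≤ k := by
  obtain ⟨E, hE, -, hDE, hUE⟩ := h.exists_isDomSet_union_of_isFreshCopy hst U hU hDS
  have hfiber (a) (ha : a ∈ U) : domNumber H ≤ (coronaFiber a E).card := by
    have hdom := hDE.coronaFiber (a := a) (by simpa using ⟨(hU a ha).1 none, hUE a ha⟩)
    rw [coronaFiber_union, (hU a ha).1.coronaFiber_eq_empty, empty_union] at hdom
    exact domNumber_le_card hdom
  calc U.card * domNumber H = ∑ a ∈ U, domNumber H := by rw [sum_const, smul_eq_mul]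
    _ ≤ ∑ a ∈ U, (coronaFiber a E).card := sum_le_sum hfiber
    _ ≤ E.card := sum_card_coronaFiber_le U E
    _ ≤ k := hE

end Corona

section Bounds

variable {α β : Type*} [Fintype α] [DecidableEq α] [Fintype β] [DecidableEq β]
  {G : SimpleGraph α} {H : SimpleGraph β}

theorem gammaMB'_coronaProd {t : ℕ} (hst : StalWinS H ∅ ∅ t)
    (hm : DomWinD H ∅ ∅ (domNumber H)) :
    gammaMB' (coronaProd G H) = (Fintype.card α * domNumber H : ℕ) := by
  have := hst.nonempty
  refine gammaMB'_eq ?_ fun k hk => ?_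
  · simpa using LocalWins.domWinS (c := fun _ => domNumber H) coronaProd_adj_coronaCopyEquiv
      fun a => by simpa using hm.domWinS_coneGraph
  · simpa using hk.card_mul_domNumber_le hst univ
      (fun a _ => ⟨isFreshCopy_empty a, isFreshCopy_empty a⟩) (disjoint_empty_left _)

/-- Dominator's first move takes a vertex `a₀` of `G`, after which he plays the S-game on the
other `n(G) - 1` copies; Staller answers any first move `v` by taking the vertices of `G`
of the copies that avoid `v`. -/
theorem gammaMB_coronaProd [Nonempty α] {t : ℕ} (hst : StalWinS H ∅ ∅ t)
    (hm : DomWinD H ∅ ∅ (domNumber H)) :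
    gammaMB (coronaProd G H) = ((Fintype.card α - 1) * domNumber H + 1 : ℕ) := by
  have := hst.nonempty
  refine gammaMB_eq ?_ fun k hk => ?_
  · obtain ⟨a₀⟩ := ‹Nonempty α›
    refine .step _ _ _ (.inl a₀) (notMem_empty _) (notMem_empty _) ?_
    have hwin : LocalWins (coneGraph H) coronaCopyEquiv (insert (.inl a₀) ∅) ∅
        (Function.update (fun _ => domNumber H) a₀ 0) := fun a => by
      rcases eq_or_ne a a₀ with rfl | ha
      · refine .done _ _ _ (isDomSet_coneGraph_apex.mono fun x hx => ?_)
        simp_all [coronaCopyEquiv]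
      · have : localPart coronaCopyEquiv a (insert (.inl a₀) ∅) = (∅ : Finset (Option β)) := by
          ext (_ | b) <;> simp [coronaCopyEquiv, ha]
        rw [this, localPart_empty, Function.update_of_ne ha]
        exact hm.domWinS_coneGraph
    have hsum : ∑ a, Function.update (fun _ => domNumber H) a₀ 0 a =
        (Fintype.card α - 1) * domNumber H := by
      rw [sum_update_of_mem (mem_univ a₀), sum_const, card_sdiff, card_univ]
      simp
    exact hsum ▸ hwin.domWinS coronaProd_adj_coronaCopyEquiv
  · have hnd : ¬ IsDomSet (coronaProd G H) ∅ := fun hdom => by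
      have := hdom.coronaFiber (a := Classical.arbitrary α) (notMem_empty _)
      rw [(isFreshCopy_empty _).coronaFiber_eq_empty] at this
      exact not_isDomSet_empty this
    cases hk with
    | done _ _ _ hdom => exact absurd hdom hnd
    | step _ _ k₀ v _ _ h =>
      have := h.card_mul_domNumber_le hst (univ.erase (coronaCopyEquiv.symm v).1)
        (fun a ha => ⟨fun x hx => (mem_erase.1 ha).1 (by
          rw [← (mem_insert.1 hx).resolve_right (notMem_empty _), Equiv.symm_apply_apply]),
          isFreshCopy_empty a⟩) (disjoint_empty_right _)
      rw [card_erase_of_mem (mem_univ _), card_univ] at this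
      omega

end Bounds

/-- If `o(H) = 𝒩` with `γ_MB(H) = γ(H)` and `G` is a graph with `n(G) ≥ 2`,
then `γ_MB(G ⊙ H) = 1 + (n(G)-1)·γ_MB(H)` and `γ_MB'(G ⊙ H) = n(G)·γ_MB(H)`.
In particular, if `γ_MB(H) = 2`, then `γ_MB(G ⊙ H) = 2·n(G) - 1` and
`γ_MB'(G ⊙ H) = 2·n(G)`. -/
theorem gammaMB_coronaProd_eqN {α β : Type*} [Fintype α] [DecidableEq α]
    [Fintype β] [DecidableEq β] (G : SimpleGraph α) (H : SimpleGraph β)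
    (hH : OutcomeN H) (heq : gammaMB H = (domNumber H : ℕ∞))
    (hn : 2 ≤ Fintype.card α) :
    (gammaMB (coronaProd G H) = 1 + ((Fintype.card α - 1 : ℕ) : ℕ∞) * gammaMB H ∧
     gammaMB' (coronaProd G H) = ((Fintype.card α : ℕ) : ℕ∞) * gammaMB H) ∧
    (gammaMB H = 2 →
      gammaMB (coronaProd G H) = ((2 * Fintype.card α - 1 : ℕ) : ℕ∞) ∧
      gammaMB' (coronaProd G H) = ((2 * Fintype.card α : ℕ) : ℕ∞)) := by
  obtain ⟨t, hst⟩ := hH.2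
  obtain ⟨m, hm, hwin⟩ := exists_domWinD_gammaMB hH.1
  obtain rfl : m = domNumber H := by exact_mod_cast hm.symm.trans heq
  have : Nonempty α := Fintype.card_pos_iff.1 (by omega)
  rw [gammaMB_coronaProd hst hwin, gammaMB'_coronaProd hst hwin, hm]
  refine ⟨⟨by push_cast; ring, by push_cast; ring⟩, fun h2 => ?_⟩
  have hm2 : domNumber H = 2 := by exact_mod_cast h2
  rw [hm2]
  constructor <;> congr 1 <;> omega
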